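/- arXiv:quant-ph/0109060 — 9 statements merged into one kernel-verified Lean document; each statement's English description precedes it below -/
import Mathlib

section
/- Let {|ψ¹_j⟩}_{j=1,…,N} be unit vectors spanning ℂ^D and {|ψ²_j⟩}_{j=1,…,N} unit vectors in ℂ^D, with Gram matrices Γ₁ and Γ₂ respectively. Suppose there exists a probabilistic transformation taking |ψ¹_j⟩ to |ψ²_j⟩ with probability vector p = (p_j), i.e., a finite family of linear operators {A_k}_{k=1,…,M} on ℂ^D with Σ_k A_k†A_k ≤ 1 such that for each k and j, A_k|ψ¹_j⟩ = c_{kj}|ψ²_j⟩ for some complex scalars c_{kj}, and p_j = ⟨ψ¹_j|(Σ_k A_k†A_k)|ψ¹_j⟩. Then there exists an N×N complex matrix Π such that: (1.a) Π is positive semidefinite; (1.b) the diagonal entries of Π are Π_{jj} = p_j; (1.c) Γ₁ − Π∘Γ₂ is positive semidefinite, where ∘ denotes the Hadamard product. -/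
open Matrix BigOperators
open scoped ComplexOrder

/-- **Theorem 1, necessity.**  If a probabilistic transformation taking the unit
vectors `ψ1 j` (spanning `ℂ^D`) to the unit vectors `ψ2 j` with probability
vector `p` exists, then there is an `N × N` matrix `Π` that is positive
semidefinite, has diagonal `p`, and such that `Γ₁ - Π ∘ Γ₂` is positive
semidefinite. -/
theorem theorem1_necessity {D N M : ℕ}
    (ψ1 ψ2 : Fin N → (Fin D → ℂ))
    (hψ1unit : ∀ j, star (ψ1 j) ⬝ᵥ ψ1 j = 1)
    (hψ2unit : ∀ j, star (ψ2 j) ⬝ᵥ ψ2 j = 1)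
    (hspan : Submodule.span ℂ (Set.range ψ1) = ⊤)
    (Γ1 Γ2 : Matrix (Fin N) (Fin N) ℂ)
    (hΓ1 : ∀ j' j, Γ1 j' j = star (ψ1 j') ⬝ᵥ ψ1 j)
    (hΓ2 : ∀ j' j, Γ2 j' j = star (ψ2 j') ⬝ᵥ ψ2 j)
    (p : Fin N → ℝ)
    (A : Fin M → Matrix (Fin D) (Fin D) ℂ)
    (c : Fin M → Fin N → ℂ)
    (hA : (1 - ∑ k, (A k)ᴴ * A k).PosSemidef)
    (hAct : ∀ k j, (A k) *ᵥ ψ1 j = c k j • ψ2 j)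
    (hp : ∀ j, (p j : ℂ) = star (ψ1 j) ⬝ᵥ ((∑ k, (A k)ᴴ * A k) *ᵥ ψ1 j)) :
    ∃ Pmat : Matrix (Fin N) (Fin N) ℂ,
      Pmat.PosSemidef ∧ (∀ j, Pmat j j = (p j : ℂ)) ∧
      (Γ1 - Matrix.hadamard Pmat Γ2).PosSemidef := by
  classical
  set C : Matrix (Fin M) (Fin N) ℂ := Matrix.of fun k j => c k j with hCdef
  set S : Matrix (Fin D) (Fin N) ℂ := Matrix.of fun i j => ψ1 j i with hSdef
  have key : ∀ j' j, star (ψ1 j') ⬝ᵥ ((∑ k, (A k)ᴴ * A k) *ᵥ ψ1 j)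
      = ∑ k, (starRingEnd ℂ) (c k j') * c k j * (star (ψ2 j') ⬝ᵥ ψ2 j) := by
    intro j' j
    have hsum : (∑ k, (A k)ᴴ * A k) *ᵥ ψ1 j = ∑ k, ((A k)ᴴ * A k) *ᵥ ψ1 j := by
      ext i
      simp only [Matrix.mulVec, dotProduct, Matrix.sum_apply, Finset.sum_apply,
        Finset.sum_mul]
      rw [Finset.sum_comm]
    have hdsum : star (ψ1 j') ⬝ᵥ (∑ k, ((A k)ᴴ * A k) *ᵥ ψ1 j)
        = ∑ k, star (ψ1 j') ⬝ᵥ (((A k)ᴴ * A k) *ᵥ ψ1 j) := by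
      simp only [dotProduct, Finset.sum_apply, Finset.mul_sum]
      rw [Finset.sum_comm]
    rw [hsum, hdsum]
    refine Finset.sum_congr rfl fun k _ => ?_
    rw [← Matrix.mulVec_mulVec, Matrix.dotProduct_mulVec, ← Matrix.star_mulVec,
      hAct, hAct, star_smul, smul_dotProduct, dotProduct_smul]
    simp [mul_assoc, mul_left_comm]
  have hCC : ∀ j' j, (Cᴴ * C) j' j = ∑ k, (starRingEnd ℂ) (c k j') * c k j := by
    intro j' j
    simp [Matrix.mul_apply, Matrix.conjTranspose_apply, hCdef]
  refine ⟨Cᴴ * C, Matrix.posSemidef_conjTranspose_mul_self C, ?_, ?_⟩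
  · intro j
    rw [hCC, hp j, key j j]
    simp [hψ2unit j]
  · have hEq : Γ1 - Matrix.hadamard (Cᴴ * C) Γ2
        = Sᴴ * (1 - ∑ k, (A k)ᴴ * A k) * S := by
      ext j' j
      have hentry : ((Sᴴ * (1 - ∑ k, (A k)ᴴ * A k) * S : Matrix (Fin N) (Fin N) ℂ)) j' j
          = star (ψ1 j') ⬝ᵥ ((1 - ∑ k, (A k)ᴴ * A k) *ᵥ ψ1 j) := by
        rw [Matrix.mul_assoc]
        simp [Matrix.mul_apply, Matrix.conjTranspose_apply, Matrix.mulVec, dotProduct,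
          hSdef, Finset.mul_sum]
      rw [Matrix.sub_apply, Matrix.hadamard_apply, hentry, Matrix.sub_mulVec,
        Matrix.one_mulVec, dotProduct_sub, key, hΓ1, hΓ2, hCC, Finset.sum_mul]
    rw [hEq]
    exact hA.conjTranspose_mul_mul_same S
end

section
/- Let {|ψ¹_j⟩}_{j=1,…,N} be linearly independent unit vectors in ℂ^D and {|ψ²_j⟩}_{j=1,…,N} unit vectors in ℂ^D, with Gram matrices Γ₁ and Γ₂ respectively. Suppose there exists an N×N complex matrix Π such that: (1.a) Π is positive semidefinite; (1.b) the diagonal entries of Π satisfy Π_{jj} = p_j for a given vector p = (p_j); (1.c) Γ₁ − Π∘Γ₂ is positive semidefinite. Then there exists a finite family of linear operators {A_k}_{k=1,…,M} on ℂ^D with Σ_k A_k†A_k ≤ 1 such that for each k and j, A_k|ψ¹_j⟩ = c_{kj}|ψ²_j⟩ for some complex scalars c_{kj}, and ⟨ψ¹_j|(Σ_k A_k†A_k)|ψ¹_j⟩ = Σ_k |c_{kj}|² = p_j for every j. -/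
/-!
Factor `Π = Bᴴ B` and let `Ψᵢ` be the matrix whose columns are the vectors `ψⁱ_j`, so that
`Γᵢ = Ψᵢᴴ Ψᵢ`. Linear independence makes `Γ₁` invertible, and `E = Γ₁⁻¹ Ψ₁ᴴ` is a left inverse
of `Ψ₁`. The operators `A_k = Ψ₂ diag(B_k) E` send `ψ¹_j` to `B_{kj} ψ²_j`, and
`∑ A_kᴴ A_k = Eᴴ (Π ∘ Γ₂) E`. Hence
`1 - ∑ A_kᴴ A_k = (1 - Ψ₁ E) + Eᴴ (Γ₁ - Π ∘ Γ₂) E`,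
where `Ψ₁ E` is the orthogonal projection onto the span of the `ψ¹_j`, so both summands are
positive semidefinite.
-/

open Matrix
open scoped ComplexOrder

namespace Matrix

variable {m m' n κ R : Type*} [Fintype m]

section CommRing

variable [CommRing R] [StarRing R]

theorem conjTranspose_mul_mul_apply (A : Matrix m n R) (S : Matrix m m R) (i j : n) :
    (Aᴴ * S * A) i j = star (A.col i) ⬝ᵥ (S *ᵥ A.col j) := by
  rw [Matrix.mul_assoc]
  simp [mul_apply, mulVec, dotProduct, Finset.mul_sum]

theorem conjTranspose_mul_self_apply [DecidableEq m] (A : Matrix m n R) (i j : n) :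
    (Aᴴ * A) i j = star (A.col i) ⬝ᵥ A.col j := by
  simpa using conjTranspose_mul_mul_apply A 1 i j

theorem sum_diagonal_star_mul_mul_diagonal [Fintype κ] [Fintype n] [DecidableEq n]
    (B : Matrix κ n R) (G : Matrix n n R) :
    ∑ k, diagonal (star (B k)) * G * diagonal (B k) = (Bᴴ * B) ⊙ G := by
  ext i j
  simp only [sum_apply, diagonal_mul, mul_diagonal, hadamard_apply, mul_apply (M := Bᴴ),
    Finset.sum_mul, conjTranspose_apply, Pi.star_apply]
  exact Finset.sum_congr rfl fun k _ => by ring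

end CommRing

theorem IsHermitian.posSemidef_one_sub {𝕜 : Type*} [RCLike 𝕜] [DecidableEq m] {P : Matrix m m 𝕜}
    (hP : P.IsHermitian) (hPP : IsIdempotentElem P) : (1 - P).PosSemidef := by
  have : (1 - P)ᴴ * (1 - P) = 1 - P := by
    rw [conjTranspose_sub, conjTranspose_one, hP.eq, sub_mul, mul_sub, mul_sub, hPP.eq]
    simp
  exact this ▸ posSemidef_conjTranspose_mul_self (1 - P)

section Biorthogonal

variable {𝕜 : Type*} [RCLike 𝕜] [Fintype n] [DecidableEq n] (Ψ : Matrix m n 𝕜)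

noncomputable def biorthogonal : Matrix n m 𝕜 := (Ψᴴ * Ψ)⁻¹ * Ψᴴ

variable {Ψ}

theorem biorthogonal_mul (hΨ : Function.Injective Ψ.mulVec) : biorthogonal Ψ * Ψ = 1 := by
  rw [biorthogonal, Matrix.mul_assoc]
  exact nonsing_inv_mul _ ((isUnit_iff_isUnit_det _).mp (PosDef.conjTranspose_mul_self Ψ hΨ).isUnit)

theorem isHermitian_mul_biorthogonal : (Ψ * biorthogonal Ψ).IsHermitian := by
  rw [biorthogonal, IsHermitian, conjTranspose_mul, conjTranspose_mul,
    (isHermitian_conjTranspose_mul_self Ψ).inv.eq, conjTranspose_conjTranspose, Matrix.mul_assoc]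

theorem isIdempotentElem_mul_biorthogonal (hΨ : Function.Injective Ψ.mulVec) :
    IsIdempotentElem (Ψ * biorthogonal Ψ) := by
  rw [IsIdempotentElem, Matrix.mul_assoc, ← Matrix.mul_assoc (biorthogonal Ψ),
    biorthogonal_mul hΨ, Matrix.one_mul]

theorem posSemidef_one_sub_conjTranspose_biorthogonal_mul_mul [DecidableEq m]
    (hΨ : Function.Injective Ψ.mulVec) {X : Matrix n n 𝕜} (hX : (Ψᴴ * Ψ - X).PosSemidef) :
    (1 - (biorthogonal Ψ)ᴴ * X * biorthogonal Ψ).PosSemidef := by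
  set E := biorthogonal Ψ
  have hgram : Eᴴ * (Ψᴴ * Ψ) * E = Ψ * E := by
    rw [← Matrix.mul_assoc, ← conjTranspose_mul, isHermitian_mul_biorthogonal.eq,
      Matrix.mul_assoc, (isIdempotentElem_mul_biorthogonal hΨ).eq]
  have hsplit : 1 - Eᴴ * X * E = (1 - Ψ * E) + Eᴴ * (Ψᴴ * Ψ - X) * E := by
    rw [Matrix.mul_sub, Matrix.sub_mul, hgram]
    abel
  rw [hsplit]
  exact (isHermitian_mul_biorthogonal.posSemidef_one_sub
    (isIdempotentElem_mul_biorthogonal hΨ)).add (hX.conjTranspose_mul_mul_same E)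

end Biorthogonal

section Kraus

variable {𝕜 : Type*} [RCLike 𝕜]

theorem conjTranspose_mul_self_apply_self [Fintype κ] (B : Matrix κ n 𝕜) (j : n) :
    (Bᴴ * B) j j = ((∑ k, ‖B k j‖ ^ 2 : ℝ) : 𝕜) := by
  simp [mul_apply, RCLike.conj_mul]

variable [Fintype n] [DecidableEq n]

noncomputable def krausOperator (Ψ₁ : Matrix m n 𝕜) (Ψ₂ : Matrix m' n 𝕜) (B : Matrix κ n 𝕜)
    (k : κ) : Matrix m' m 𝕜 :=
  Ψ₂ * diagonal (B k) * biorthogonal Ψ₁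

variable {Ψ₁ : Matrix m n 𝕜} {Ψ₂ : Matrix m' n 𝕜} {B : Matrix κ n 𝕜}

theorem krausOperator_mulVec_col (hΨ₁ : Function.Injective Ψ₁.mulVec) (k : κ) (j : n) :
    krausOperator Ψ₁ Ψ₂ B k *ᵥ Ψ₁.col j = B k j • Ψ₂.col j := by
  rw [← mulVec_single_one, mulVec_mulVec, krausOperator, Matrix.mul_assoc, biorthogonal_mul hΨ₁,
    Matrix.mul_one, mulVec_single_one]
  ext i
  simp [mul_comm]

theorem sum_conjTranspose_krausOperator_mul_self [Fintype m'] [Fintype κ] :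
    ∑ k, (krausOperator Ψ₁ Ψ₂ B k)ᴴ * krausOperator Ψ₁ Ψ₂ B k =
      (biorthogonal Ψ₁)ᴴ * ((Bᴴ * B) ⊙ (Ψ₂ᴴ * Ψ₂)) * biorthogonal Ψ₁ := by
  simp only [krausOperator, conjTranspose_mul, diagonal_conjTranspose, Matrix.mul_assoc]
  rw [← sum_diagonal_star_mul_mul_diagonal, Matrix.sum_mul, Matrix.mul_sum]
  simp only [Matrix.mul_assoc]

theorem star_col_dotProduct_sum_krausOperator_mulVec_col [Fintype m'] [Fintype κ]
    (hΨ₁ : Function.Injective Ψ₁.mulVec) (j : n) :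
    star (Ψ₁.col j) ⬝ᵥ ((∑ k, (krausOperator Ψ₁ Ψ₂ B k)ᴴ * krausOperator Ψ₁ Ψ₂ B k) *ᵥ Ψ₁.col j) =
      (Bᴴ * B) j j * (Ψ₂ᴴ * Ψ₂) j j := by
  set H := (Bᴴ * B) ⊙ (Ψ₂ᴴ * Ψ₂)
  have hpullback : Ψ₁ᴴ * ((biorthogonal Ψ₁)ᴴ * H * biorthogonal Ψ₁) * Ψ₁ = H := by
    calc Ψ₁ᴴ * ((biorthogonal Ψ₁)ᴴ * H * biorthogonal Ψ₁) * Ψ₁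
        = (biorthogonal Ψ₁ * Ψ₁)ᴴ * H * (biorthogonal Ψ₁ * Ψ₁) := by
          simp only [conjTranspose_mul, Matrix.mul_assoc]
      _ = H := by simp [biorthogonal_mul hΨ₁]
  rw [← conjTranspose_mul_mul_apply, sum_conjTranspose_krausOperator_mul_self, hpullback]
  rfl

end Kraus

end Matrix

theorem theorem1_sufficiency_general {D N : ℕ}
    (ψ1 ψ2 : Fin N → (Fin D → ℂ))
    (hψ2unit : ∀ j, star (ψ2 j) ⬝ᵥ ψ2 j = 1)
    (hindep : LinearIndependent ℂ ψ1)
    (Γ1 Γ2 : Matrix (Fin N) (Fin N) ℂ)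
    (hΓ1 : ∀ j' j, Γ1 j' j = star (ψ1 j') ⬝ᵥ ψ1 j)
    (hΓ2 : ∀ j' j, Γ2 j' j = star (ψ2 j') ⬝ᵥ ψ2 j)
    (p : Fin N → ℝ)
    (Pmat : Matrix (Fin N) (Fin N) ℂ)
    (hPos : Pmat.PosSemidef)
    (hDiag : ∀ j, Pmat j j = (p j : ℂ))
    (hG : (Γ1 - Matrix.hadamard Pmat Γ2).PosSemidef) :
    ∃ (M : ℕ) (A : Fin M → Matrix (Fin D) (Fin D) ℂ) (c : Fin M → Fin N → ℂ),
      (1 - ∑ k, (A k)ᴴ * A k).PosSemidef ∧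
      (∀ k j, (A k) *ᵥ ψ1 j = c k j • ψ2 j) ∧
      (∀ j, star (ψ1 j) ⬝ᵥ ((∑ k, (A k)ᴴ * A k) *ᵥ ψ1 j) = (p j : ℂ)) ∧
      (∀ j, ∑ k, ‖c k j‖ ^ 2 = p j) := by
  obtain ⟨B, rfl⟩ : ∃ B : Matrix (Fin N) (Fin N) ℂ, Pmat = Bᴴ * B := by
    open scoped MatrixOrder in
    exact CStarAlgebra.nonneg_iff_eq_star_mul_self.mp hPos.nonneg
  -- `Ψ1.col j` and `Ψ2.col j` are `ψ1 j` and `ψ2 j` by definition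
  let Ψ1 : Matrix (Fin D) (Fin N) ℂ := (of ψ1)ᵀ
  let Ψ2 : Matrix (Fin D) (Fin N) ℂ := (of ψ2)ᵀ
  have hinj : Function.Injective Ψ1.mulVec := mulVec_injective_iff.mpr hindep
  have hgram1 : Γ1 = Ψ1ᴴ * Ψ1 := by ext j' j; rw [hΓ1, conjTranspose_mul_self_apply]; rfl
  have hgram2 : Γ2 = Ψ2ᴴ * Ψ2 := by ext j' j; rw [hΓ2, conjTranspose_mul_self_apply]; rfl
  subst hgram1 hgram2
  refine ⟨N, krausOperator Ψ1 Ψ2 B, B, ?_, krausOperator_mulVec_col hinj, fun j => ?_, fun j => ?_⟩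
  · rw [sum_conjTranspose_krausOperator_mul_self]
    exact posSemidef_one_sub_conjTranspose_biorthogonal_mul_mul hinj hG
  · refine (star_col_dotProduct_sum_krausOperator_mulVec_col hinj j).trans ?_
    rw [hΓ2, hψ2unit, mul_one, hDiag]
  · exact Complex.ofReal_injective ((conjTranspose_mul_self_apply_self B j).symm.trans (hDiag j))

/-- **Theorem 1, sufficiency.**  If the initial unit vectors `ψ1 j` are linearly
independent and there is an `N × N` matrix `Π` that is positive semidefinite,
has diagonal `p`, and is such that `Γ₁ - Π ∘ Γ₂` is positive semidefinite, then
there is a probabilistic transformation taking `ψ1 j` to `ψ2 j` with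
probability vector `p`. -/
theorem theorem1_sufficiency {D N : ℕ}
    (ψ1 ψ2 : Fin N → (Fin D → ℂ))
    (hψ1unit : ∀ j, star (ψ1 j) ⬝ᵥ ψ1 j = 1)
    (hψ2unit : ∀ j, star (ψ2 j) ⬝ᵥ ψ2 j = 1)
    (hindep : LinearIndependent ℂ ψ1)
    (Γ1 Γ2 : Matrix (Fin N) (Fin N) ℂ)
    (hΓ1 : ∀ j' j, Γ1 j' j = star (ψ1 j') ⬝ᵥ ψ1 j)
    (hΓ2 : ∀ j' j, Γ2 j' j = star (ψ2 j') ⬝ᵥ ψ2 j)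
    (p : Fin N → ℝ)
    (Pmat : Matrix (Fin N) (Fin N) ℂ)
    (hPos : Pmat.PosSemidef)
    (hDiag : ∀ j, Pmat j j = (p j : ℂ))
    (hG : (Γ1 - Matrix.hadamard Pmat Γ2).PosSemidef) :
    ∃ (M : ℕ) (A : Fin M → Matrix (Fin D) (Fin D) ℂ) (c : Fin M → Fin N → ℂ),
      (1 - ∑ k, (A k)ᴴ * A k).PosSemidef ∧
      (∀ k j, (A k) *ᵥ ψ1 j = c k j • ψ2 j) ∧
      (∀ j, star (ψ1 j) ⬝ᵥ ((∑ k, (A k)ᴴ * A k) *ᵥ ψ1 j) = (p j : ℂ)) ∧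
      (∀ j, ∑ k, ‖c k j‖ ^ 2 = p j) :=
  theorem1_sufficiency_general ψ1 ψ2 hψ2unit hindep Γ1 Γ2 hΓ1 hΓ2 p Pmat hPos hDiag hG
end

section
/- Let {|ψ¹_j⟩}_{j=1,…,N} be unit vectors spanning ℂ^D and {|ψ²_j⟩}_{j=1,…,N} unit vectors in ℂ^D, with Gram matrices Γ₁ and Γ₂, and suppose every entry of Γ₂ is nonzero. If there exists a deterministic transformation taking |ψ¹_j⟩ to |ψ²_j⟩ for all j (a probabilistic transformation, as defined by Kraus operators {A_k} with Σ_k A_k†A_k ≤ 1 and A_k|ψ¹_j⟩ = c_{kj}|ψ²_j⟩, whose success probabilities p_j = ⟨ψ¹_j|(Σ_k A_k†A_k)|ψ¹_j⟩ all equal 1), then the matrix Γ₁∘Γ₂^{∘−1} is positive semidefinite, where Γ₂^{∘−1} denotes the Hadamard (entrywise) inverse of Γ₂. -/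
open Matrix BigOperators
open scoped ComplexOrder

/-- If a deterministic transformation takes the unit vectors `ψ1 j` (spanning
`ℂ^D`) to the unit vectors `ψ2 j`, and all entries of the Gram matrix `Γ₂` of
the final states are nonzero, then `Γ₁ ∘ Γ₂^{∘-1}` (Hadamard quotient) is
positive semidefinite. -/
theorem deterministic_hadamard_inverse_posSemidef {D N M : ℕ}
    (ψ1 ψ2 : Fin N → (Fin D → ℂ))
    (hψ1unit : ∀ j, star (ψ1 j) ⬝ᵥ ψ1 j = 1)
    (hψ2unit : ∀ j, star (ψ2 j) ⬝ᵥ ψ2 j = 1)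
    (hspan : Submodule.span ℂ (Set.range ψ1) = ⊤)
    (Γ1 Γ2 : Matrix (Fin N) (Fin N) ℂ)
    (hΓ1 : ∀ j' j, Γ1 j' j = star (ψ1 j') ⬝ᵥ ψ1 j)
    (hΓ2 : ∀ j' j, Γ2 j' j = star (ψ2 j') ⬝ᵥ ψ2 j)
    (hΓ2ne : ∀ j' j, Γ2 j' j ≠ 0)
    (A : Fin M → Matrix (Fin D) (Fin D) ℂ)
    (c : Fin M → Fin N → ℂ)
    (hA : (1 - ∑ k, (A k)ᴴ * A k).PosSemidef)
    (hAct : ∀ k j, (A k) *ᵥ ψ1 j = c k j • ψ2 j)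
    (hdet : ∀ j, star (ψ1 j) ⬝ᵥ ((∑ k, (A k)ᴴ * A k) *ᵥ ψ1 j) = 1) :
    Matrix.PosSemidef (fun j' j => Γ1 j' j * (Γ2 j' j)⁻¹ : Matrix (Fin N) (Fin N) ℂ) := by
  set B : Matrix (Fin D) (Fin D) ℂ := ∑ k, (A k)ᴴ * A k with hB
  -- B fixes each ψ1 j
  have hfix : ∀ j, B *ᵥ ψ1 j = ψ1 j := by
    intro j
    have h0 : star (ψ1 j) ⬝ᵥ (1 - B) *ᵥ ψ1 j = 0 := by
      rw [sub_mulVec, dotProduct_sub, one_mulVec, hψ1unit j, hdet j, sub_self]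
    have := (hA.dotProduct_mulVec_zero_iff (ψ1 j)).mp h0
    rw [sub_mulVec, one_mulVec, sub_eq_zero] at this
    exact this.symm
  -- entry formula
  have key : ∀ j' j, Γ1 j' j = (∑ k, star (c k j') * c k j) * Γ2 j' j := by
    intro j' j
    have h1 : Γ1 j' j = star (ψ1 j') ⬝ᵥ (B *ᵥ ψ1 j) := by rw [hfix j, hΓ1]
    have hsum : B *ᵥ ψ1 j = ∑ k, ((A k)ᴴ * A k) *ᵥ ψ1 j := by
      ext i
      simp only [hB, Matrix.mulVec, dotProduct, Matrix.sum_apply, Finset.sum_apply,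
        Finset.sum_mul]
      exact Finset.sum_comm
    have hsum2 : star (ψ1 j') ⬝ᵥ (∑ k, ((A k)ᴴ * A k) *ᵥ ψ1 j)
        = ∑ k, star (ψ1 j') ⬝ᵥ (((A k)ᴴ * A k) *ᵥ ψ1 j) := by
      simp only [dotProduct, Finset.sum_apply, Finset.mul_sum]
      exact Finset.sum_comm
    rw [h1, hsum, hsum2, Finset.sum_mul]
    refine Finset.sum_congr rfl fun k _ => ?_
    have h2 : ((A k)ᴴ * A k) *ᵥ ψ1 j = (A k)ᴴ *ᵥ (A k *ᵥ ψ1 j) :=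
      (Matrix.mulVec_mulVec _ _ _).symm
    rw [h2, dotProduct_mulVec, vecMul_conjTranspose, star_star, hAct, hAct]
    simp only [star_smul, smul_dotProduct, dotProduct_smul, smul_eq_mul,
      star_trivial, hΓ2]
    ring
  -- the Hadamard quotient is a Gram matrix
  have hW : (fun j' j => Γ1 j' j * (Γ2 j' j)⁻¹ : Matrix (Fin N) (Fin N) ℂ)
      = (Matrix.of c)ᴴ * (Matrix.of c) := by
    ext j' j
    rw [Matrix.mul_apply]
    show Γ1 j' j * (Γ2 j' j)⁻¹ = _
    rw [key j' j, mul_assoc, mul_inv_cancel₀ (hΓ2ne j' j), mul_one]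
    simp [Matrix.conjTranspose_apply]
  rw [hW]
  exact Matrix.posSemidef_conjTranspose_mul_self _
end

section
/- Let {|ψ¹_j⟩}_{j=1,…,N} be unit vectors spanning ℂ^D with Gram matrix Γ₁, and let {|x_j⟩}_{j=1,…,N} be an orthonormal set in ℂ^D. If there exists a probabilistic transformation taking |ψ¹_j⟩ to |x_j⟩ with probability vector p = (p_j) (i.e., operators {A_k} with Σ_k A_k†A_k ≤ 1, A_k|ψ¹_j⟩ = c_{kj}|x_j⟩, and p_j = ⟨ψ¹_j|(Σ_k A_k†A_k)|ψ¹_j⟩), then the matrix Γ₁ − Δ(p) is positive semidefinite, where Δ(p) is the N×N diagonal matrix with entries Δ(p)_{j'j} = p_j δ_{j'j}. (This is the Duan–Guo condition for unambiguous state discrimination.) -/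
open Matrix BigOperators
open scoped ComplexOrder

/-!
Let `V` be the `D × N` matrix with columns `ψ1 j` and `S = ∑ₖ Aₖᴴ Aₖ`. Then `Γ₁ = Vᴴ V`, and
`Vᴴ S V = Δ(p)`: its off-diagonal entries are `∑ₖ c̄ₖⱼ' cₖⱼ ⟨x j'|x j⟩ = 0` by orthogonality of the
targets, its diagonal entries are `p j` by definition. Hence `Γ₁ - Δ(p) = Vᴴ (1 - S) V ≥ 0`.
-/

namespace Matrix

variable {R l n : Type*} [CommRing R] [StarRing R] [Fintype n]

theorem conjTranspose_mul_mul_apply_of_columns [Fintype l] (ψ : l → n → R) (B : Matrix n n R)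
    (i j : l) : ((of ψ)ᵀᴴ * B * (of ψ)ᵀ) i j = star (ψ i) ⬝ᵥ (B *ᵥ ψ j) := by
  simp only [mul_apply, dotProduct, mulVec, conjTranspose_apply, transpose_apply, of_apply,
    Pi.star_apply, Finset.mul_sum, Finset.sum_mul, mul_assoc]
  exact Finset.sum_comm

theorem dotProduct_conjTranspose_mul_self_mulVec (A : Matrix n n R) (v w : n → R) :
    star v ⬝ᵥ ((Aᴴ * A) *ᵥ w) = star (A *ᵥ v) ⬝ᵥ (A *ᵥ w) := by
  rw [← mulVec_mulVec, dotProduct_mulVec, ← star_mulVec]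

theorem dotProduct_sum_conjTranspose_mul_self_mulVec_eq_zero {ι : Type*} [Fintype ι]
    (A : ι → Matrix n n R) (c c' : ι → R) {v w x y : n → R} (hxy : star x ⬝ᵥ y = 0)
    (hv : ∀ k, A k *ᵥ v = c k • x) (hw : ∀ k, A k *ᵥ w = c' k • y) :
    star v ⬝ᵥ ((∑ k, (A k)ᴴ * A k) *ᵥ w) = 0 := by
  simp only [sum_mulVec, dotProduct_sum, dotProduct_conjTranspose_mul_self_mulVec, hv, hw,
    star_smul, smul_dotProduct, dotProduct_smul, hxy, smul_zero, Finset.sum_const_zero]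

end Matrix

theorem duan_guo_necessity_general {D N M : ℕ}
    (ψ1 x : Fin N → (Fin D → ℂ))
    (hortho : ∀ j' j, star (x j') ⬝ᵥ x j = if j' = j then 1 else 0)
    (Γ1 : Matrix (Fin N) (Fin N) ℂ)
    (hΓ1 : ∀ j' j, Γ1 j' j = star (ψ1 j') ⬝ᵥ ψ1 j)
    (p : Fin N → ℝ)
    (A : Fin M → Matrix (Fin D) (Fin D) ℂ)
    (c : Fin M → Fin N → ℂ)
    (hA : (1 - ∑ k, (A k)ᴴ * A k).PosSemidef)
    (hAct : ∀ k j, (A k) *ᵥ ψ1 j = c k j • x j)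
    (hp : ∀ j, (p j : ℂ) = star (ψ1 j) ⬝ᵥ ((∑ k, (A k)ᴴ * A k) *ᵥ ψ1 j)) :
    (Γ1 - Matrix.diagonal (fun j => (p j : ℂ))).PosSemidef := by
  have hΓ : Γ1 = (of ψ1)ᵀᴴ * (1 : Matrix (Fin D) (Fin D) ℂ) * (of ψ1)ᵀ := by
    ext j' j
    rw [hΓ1, conjTranspose_mul_mul_apply_of_columns, one_mulVec]
  have hΔ : diagonal (fun j => (p j : ℂ)) = (of ψ1)ᵀᴴ * (∑ k, (A k)ᴴ * A k) * (of ψ1)ᵀ := by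
    ext j' j
    rw [conjTranspose_mul_mul_apply_of_columns, diagonal_apply]
    split_ifs with h
    · rw [h, hp]
    · exact (dotProduct_sum_conjTranspose_mul_self_mulVec_eq_zero A (c · j') (c · j)
        (by rw [hortho, if_neg h]) (hAct · j') (hAct · j)).symm
  rw [hΓ, hΔ, ← Matrix.sub_mul, ← Matrix.mul_sub]
  exact hA.conjTranspose_mul_mul_same _

/-- **Duan–Guo condition, necessity.**  If a probabilistic transformation takes
the unit vectors `ψ1 j` (spanning `ℂ^D`) to an orthonormal set `x j` with
probability vector `p` (unambiguous state discrimination), then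
`Γ₁ - Δ(p)` is positive semidefinite. -/
theorem duan_guo_necessity {D N M : ℕ}
    (ψ1 x : Fin N → (Fin D → ℂ))
    (hψ1unit : ∀ j, star (ψ1 j) ⬝ᵥ ψ1 j = 1)
    (hspan : Submodule.span ℂ (Set.range ψ1) = ⊤)
    (hortho : ∀ j' j, star (x j') ⬝ᵥ x j = if j' = j then 1 else 0)
    (Γ1 : Matrix (Fin N) (Fin N) ℂ)
    (hΓ1 : ∀ j' j, Γ1 j' j = star (ψ1 j') ⬝ᵥ ψ1 j)
    (p : Fin N → ℝ)
    (A : Fin M → Matrix (Fin D) (Fin D) ℂ)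
    (c : Fin M → Fin N → ℂ)
    (hA : (1 - ∑ k, (A k)ᴴ * A k).PosSemidef)
    (hAct : ∀ k j, (A k) *ᵥ ψ1 j = c k j • x j)
    (hp : ∀ j, (p j : ℂ) = star (ψ1 j) ⬝ᵥ ((∑ k, (A k)ᴴ * A k) *ᵥ ψ1 j)) :
    (Γ1 - Matrix.diagonal (fun j => (p j : ℂ))).PosSemidef :=
  duan_guo_necessity_general ψ1 x hortho Γ1 hΓ1 p A c hA hAct hp
end

section
/- Let {|ψ¹_j⟩}_{j=1,…,N} be linearly independent unit vectors in ℂ^D with Gram matrix Γ₁, let {|x_j⟩}_{j=1,…,N} be an orthonormal set in ℂ^D, and let p = (p_j) be a vector of nonnegative reals such that Γ₁ − Δ(p) is positive semidefinite, where Δ(p) is the diagonal matrix with entries p_j. Then there exists a single linear operator A_S on ℂ^D with A_S†A_S ≤ 1 and complex scalars c_j such that A_S|ψ¹_j⟩ = c_j|x_j⟩ and |c_j|² = p_j for every j. (Unambiguous state discrimination with probabilities p is achievable with a single transformation operator.) -/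
/-!
Put the states `ψ1 j` as columns of `V` (so `Γ1 = VᴴV`, invertible by linear independence) and
`√p j • x j` as columns of `B` (so `BᴴB = Δ(p)`). With the left inverse `W = (VᴴV)⁻¹Vᴴ` of `V`,
the operator `A = BW` maps each `ψ1 j` to `√p j • x j`, and
`1 - AᴴA = (1 - VW) + Wᴴ(VᴴV - BᴴB)W` is a sum of positive semidefinite matrices: `VW` is the
orthogonal projection onto the span of the states, and the second term is a congruence of
`Γ1 - Δ(p)`.
-/

open Matrix BigOperators
open scoped ComplexOrder MatrixOrder

namespace Matrix

variable {𝕜 k m n : Type*} [RCLike 𝕜] [Fintype k] [Fintype m] [Fintype n] [DecidableEq n]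

lemma isStarProjection_mul_nonsing_inv_mul_conjTranspose {V : Matrix m n 𝕜}
    (hV : IsUnit (Vᴴ * V)) : IsStarProjection (V * (Vᴴ * V)⁻¹ * Vᴴ) := by
  have hVV : (Vᴴ * V)⁻¹ * (Vᴴ * V) = 1 := nonsing_inv_mul _ ((isUnit_iff_isUnit_det _).mp hV)
  refine ⟨?_, isHermitian_mul_mul_conjTranspose V (isHermitian_conjTranspose_mul_self V).inv⟩
  calc V * (Vᴴ * V)⁻¹ * Vᴴ * (V * (Vᴴ * V)⁻¹ * Vᴴ)
      = V * ((Vᴴ * V)⁻¹ * (Vᴴ * V)) * (Vᴴ * V)⁻¹ * Vᴴ := by simp only [Matrix.mul_assoc]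
    _ = V * (Vᴴ * V)⁻¹ * Vᴴ := by rw [hVV, Matrix.mul_one]

theorem exists_contraction_mul_eq_of_conjTranspose_mul_self_le [DecidableEq m]
    {V : Matrix m n 𝕜} {B : Matrix k n 𝕜} (hV : IsUnit (Vᴴ * V)) (hB : Bᴴ * B ≤ Vᴴ * V) :
    ∃ A : Matrix k m 𝕜, A * V = B ∧ Aᴴ * A ≤ 1 := by
  have hVV : (Vᴴ * V)⁻¹ * (Vᴴ * V) = 1 := nonsing_inv_mul _ ((isUnit_iff_isUnit_det _).mp hV)
  set W := (Vᴴ * V)⁻¹ * Vᴴ with hW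
  have hWH : Wᴴ = V * (Vᴴ * V)⁻¹ := by
    rw [hW, conjTranspose_mul, conjTranspose_conjTranspose,
      (isHermitian_conjTranspose_mul_self V).inv.eq]
  refine ⟨B * W, by rw [Matrix.mul_assoc, hW, Matrix.mul_assoc, hVV, Matrix.mul_one], ?_⟩
  have hsplit : 1 - (B * W)ᴴ * (B * W) = (1 - V * W) + Wᴴ * (Vᴴ * V - Bᴴ * B) * W := by
    have hWVVW : Wᴴ * (Vᴴ * V) * W = V * W := by
      rw [hWH, Matrix.mul_assoc V, hVV, Matrix.mul_one]
    rw [Matrix.mul_sub, Matrix.sub_mul, hWVVW, conjTranspose_mul]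
    simp only [Matrix.mul_assoc]
    abel
  have hproj : (1 - V * W).PosSemidef := by
    simpa only [Matrix.mul_assoc] using
      (isStarProjection_mul_nonsing_inv_mul_conjTranspose hV).one_sub_nonneg.posSemidef
  rw [le_iff, hsplit]
  exact hproj.add (hB.conjTranspose_mul_mul_same W)

end Matrix

theorem duan_guo_sufficiency_single_operator_general {D N : ℕ}
    (ψ1 x : Fin N → (Fin D → ℂ))
    (hindep : LinearIndependent ℂ ψ1)
    (hortho : ∀ j' j, star (x j') ⬝ᵥ x j = if j' = j then 1 else 0)
    (Γ1 : Matrix (Fin N) (Fin N) ℂ)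
    (hΓ1 : ∀ j' j, Γ1 j' j = star (ψ1 j') ⬝ᵥ ψ1 j)
    (p : Fin N → ℝ)
    (hp : ∀ j, 0 ≤ p j)
    (hPSD : (Γ1 - Matrix.diagonal (fun j => (p j : ℂ))).PosSemidef) :
    ∃ (AS : Matrix (Fin D) (Fin D) ℂ) (c : Fin N → ℂ),
      (1 - ASᴴ * AS).PosSemidef ∧
      (∀ j, AS *ᵥ ψ1 j = c j • x j) ∧
      (∀ j, ‖c j‖ ^ 2 = p j) := by
  set V : Matrix (Fin D) (Fin N) ℂ := (of ψ1)ᵀ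
  set X : Matrix (Fin D) (Fin N) ℂ := (of x)ᵀ
  set c : Fin N → ℂ := fun j => (√(p j) : ℂ)
  have hΓV : Γ1 = Vᴴ * V := by
    ext j' j
    simp [hΓ1, V, mul_apply, dotProduct]
  have hXX : Xᴴ * X = 1 := by
    ext j' j
    simpa [X, mul_apply, dotProduct, one_apply] using hortho j' j
  have hB : (X * diagonal c)ᴴ * (X * diagonal c) = diagonal fun j => (p j : ℂ) := by
    rw [conjTranspose_mul, Matrix.mul_assoc, ← Matrix.mul_assoc Xᴴ, hXX, Matrix.one_mul,
      diagonal_conjTranspose, diagonal_mul_diagonal]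
    congr 1
    ext j
    simp [c, ← Complex.ofReal_mul, Real.mul_self_sqrt (hp j)]
  have hV : IsUnit (Vᴴ * V) :=
    (PosDef.conjTranspose_mul_self V (mulVec_injective_iff.mpr hindep)).isUnit
  obtain ⟨A, hAV, hA⟩ :=
    exists_contraction_mul_eq_of_conjTranspose_mul_self_le hV (by rwa [le_iff, hB, ← hΓV])
  refine ⟨A, c, hA, fun j => ?_, fun j => ?_⟩
  · have hcol : A *ᵥ ψ1 j = (X * diagonal c).col j := by
      rw [show ψ1 j = V.col j from rfl, ← mulVec_single_one, mulVec_mulVec, hAV,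
        mulVec_single_one]
    ext i
    simpa [X, mul_comm] using congrFun hcol i
  · simp [c, Complex.norm_real, sq_abs, Real.sq_sqrt (hp j)]

/-- **Duan–Guo condition, sufficiency with a single operator.**  If the unit
vectors `ψ1 j` are linearly independent, `x j` is an orthonormal set,
`p j ≥ 0`, and `Γ₁ - Δ(p)` is positive semidefinite, then there is a single
operator `A_S` with `A_S† A_S ≤ 1` realising unambiguous state discrimination
with probabilities `p`. -/
theorem duan_guo_sufficiency_single_operator {D N : ℕ}
    (ψ1 x : Fin N → (Fin D → ℂ))
    (hψ1unit : ∀ j, star (ψ1 j) ⬝ᵥ ψ1 j = 1)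
    (hindep : LinearIndependent ℂ ψ1)
    (hortho : ∀ j' j, star (x j') ⬝ᵥ x j = if j' = j then 1 else 0)
    (Γ1 : Matrix (Fin N) (Fin N) ℂ)
    (hΓ1 : ∀ j' j, Γ1 j' j = star (ψ1 j') ⬝ᵥ ψ1 j)
    (p : Fin N → ℝ)
    (hp : ∀ j, 0 ≤ p j)
    (hPSD : (Γ1 - Matrix.diagonal (fun j => (p j : ℂ))).PosSemidef) :
    ∃ (AS : Matrix (Fin D) (Fin D) ℂ) (c : Fin N → ℂ),
      (1 - ASᴴ * AS).PosSemidef ∧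
      (∀ j, AS *ᵥ ψ1 j = c j • x j) ∧
      (∀ j, ‖c j‖ ^ 2 = p j) :=
  duan_guo_sufficiency_single_operator_general ψ1 x hindep hortho Γ1 hΓ1 p hp hPSD
end

section
/- Let {|ψ¹_j⟩}_{j=1,…,N} be unit vectors spanning ℂ^D and {|ψ²_j⟩}_{j=1,…,N} unit vectors in ℂ^D, with Gram matrices Γ₁ and Γ₂. Suppose there exists a single linear operator A_S on ℂ^D with A_S†A_S ≤ 1 and complex scalars c_j such that A_S|ψ¹_j⟩ = c_j|ψ²_j⟩ for all j, and let p_j = |c_j|². Then the N×N matrix Π with entries Π_{j'j} = c̄_{j'} c_j is positive semidefinite of rank at most one, has diagonal entries Π_{jj} = p_j, and satisfies that Γ₁ − Π∘Γ₂ is positive semidefinite. -/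
open Matrix
open scoped ComplexOrder

/-!
Put the vectors `ψ1 j` and `ψ2 j` as the columns of `D × N` matrices `B₁`, `B₂`, so that
`Γᵢ = Bᵢᴴ Bᵢ`. The hypothesis on `A_S` says `A_S B₁ = B₂ diag(c)`, whence
`(A_S B₁)ᴴ (A_S B₁) = diag(c̄) Γ₂ diag(c) = Π ∘ Γ₂` and
`Γ₁ - Π ∘ Γ₂ = B₁ᴴ (1 - A_Sᴴ A_S) B₁`, a congruence of a positive semidefinite matrix.
The remaining claims hold because `Π = c̄ cᵀ` is an outer product.
-/

namespace Matrix

variable {l m n R : Type*}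

theorem diagonal_mul_mul_diagonal [Fintype n] [DecidableEq n] [CommSemiring R]
    (a b : n → R) (M : Matrix n n R) :
    diagonal a * M * diagonal b = vecMulVec a b ⊙ M := by
  ext i j
  simp only [mul_diagonal, diagonal_mul, hadamard_apply, vecMulVec_apply]
  ring

theorem conjTranspose_mul_self_transpose_of [Fintype m] [NonUnitalSemiring R] [StarRing R]
    (ψ : n → m → R) :
    (of ψ)ᵀᴴ * (of ψ)ᵀ = of fun i j => star (ψ i) ⬝ᵥ ψ j := by
  ext i j
  simp [mul_apply, dotProduct]

theorem mul_transpose_of_eq_transpose_of_mul_diagonal [Fintype m] [Fintype n] [DecidableEq n]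
    [CommSemiring R] {A : Matrix l m R} {ψ : n → m → R} {φ : n → l → R}
    {c : n → R} (h : ∀ j, A *ᵥ ψ j = c j • φ j) :
    A * (of ψ)ᵀ = (of φ)ᵀ * diagonal c := by
  ext i j
  rw [mul_diagonal]
  simpa [mul_comm, mul_apply, mulVec, dotProduct] using congrFun (h j) i

theorem PosSemidef.conjTranspose_mul_self_sub_hadamard [Fintype m] [Fintype n] [DecidableEq m]
    [DecidableEq n] [CommRing R] [PartialOrder R] [StarRing R] {B₁ B₂ : Matrix m n R}
    {A : Matrix m m R} {c : n → R} (hA : (1 - Aᴴ * A).PosSemidef)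
    (hAB : A * B₁ = B₂ * diagonal c) :
    (B₁ᴴ * B₁ - vecMulVec (star c) c ⊙ (B₂ᴴ * B₂)).PosSemidef := by
  have hcongr : B₁ᴴ * (1 - Aᴴ * A) * B₁ = B₁ᴴ * B₁ - (A * B₁)ᴴ * (A * B₁) := by
    simp only [Matrix.mul_sub, Matrix.sub_mul, Matrix.mul_one, conjTranspose_mul,
      Matrix.mul_assoc]
  have himage : (A * B₁)ᴴ * (A * B₁) = vecMulVec (star c) c ⊙ (B₂ᴴ * B₂) := by
    rw [hAB, ← diagonal_mul_mul_diagonal, conjTranspose_mul, diagonal_conjTranspose]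
    simp only [Matrix.mul_assoc]
  rw [← himage, ← hcongr]
  exact hA.conjTranspose_mul_mul_same B₁

end Matrix

theorem single_operator_necessity_general {D N : ℕ}
    (ψ1 ψ2 : Fin N → (Fin D → ℂ))
    (Γ1 Γ2 : Matrix (Fin N) (Fin N) ℂ)
    (hΓ1 : ∀ j' j, Γ1 j' j = star (ψ1 j') ⬝ᵥ ψ1 j)
    (hΓ2 : ∀ j' j, Γ2 j' j = star (ψ2 j') ⬝ᵥ ψ2 j)
    (AS : Matrix (Fin D) (Fin D) ℂ)
    (c : Fin N → ℂ)
    (hAS : (1 - ASᴴ * AS).PosSemidef)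
    (hAct : ∀ j, AS *ᵥ ψ1 j = c j • ψ2 j)
    (p : Fin N → ℝ)
    (hp : ∀ j, p j = ‖c j‖ ^ 2) :
    (Matrix.PosSemidef (fun j' j => star (c j') * c j : Matrix (Fin N) (Fin N) ℂ)) ∧
    (Matrix.rank (fun j' j => star (c j') * c j : Matrix (Fin N) (Fin N) ℂ) ≤ 1) ∧
    (∀ j, (fun j' j => star (c j') * c j : Matrix (Fin N) (Fin N) ℂ) j j = (p j : ℂ)) ∧
    (Γ1 - Matrix.hadamard (fun j' j => star (c j') * c j) Γ2).PosSemidef := by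
  refine ⟨posSemidef_vecMulVec_star_self c, rank_vecMulVec_le _ c, fun j => ?_, ?_⟩
  · rw [hp j, Complex.ofReal_pow]
    exact Complex.conj_mul' (c j)
  · rw [(Matrix.ext hΓ1).trans (conjTranspose_mul_self_transpose_of ψ1).symm,
      (Matrix.ext hΓ2).trans (conjTranspose_mul_self_transpose_of ψ2).symm]
    exact hAS.conjTranspose_mul_self_sub_hadamard
      (mul_transpose_of_eq_transpose_of_mul_diagonal hAct)

/-- **Single-operator transformation, necessity.**  If a single operator `A_S`
with `A_S† A_S ≤ 1` takes the unit vectors `ψ1 j` (spanning `ℂ^D`) to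
`c j • ψ2 j`, then the matrix `Π` with entries `Π_{j'j} = conj (c j') * c j` is
positive semidefinite of rank at most one, has diagonal `p j = ‖c j‖²`, and
`Γ₁ - Π ∘ Γ₂` is positive semidefinite. -/
theorem single_operator_necessity {D N : ℕ}
    (ψ1 ψ2 : Fin N → (Fin D → ℂ))
    (hψ1unit : ∀ j, star (ψ1 j) ⬝ᵥ ψ1 j = 1)
    (hψ2unit : ∀ j, star (ψ2 j) ⬝ᵥ ψ2 j = 1)
    (hspan : Submodule.span ℂ (Set.range ψ1) = ⊤)
    (Γ1 Γ2 : Matrix (Fin N) (Fin N) ℂ)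
    (hΓ1 : ∀ j' j, Γ1 j' j = star (ψ1 j') ⬝ᵥ ψ1 j)
    (hΓ2 : ∀ j' j, Γ2 j' j = star (ψ2 j') ⬝ᵥ ψ2 j)
    (AS : Matrix (Fin D) (Fin D) ℂ)
    (c : Fin N → ℂ)
    (hAS : (1 - ASᴴ * AS).PosSemidef)
    (hAct : ∀ j, AS *ᵥ ψ1 j = c j • ψ2 j)
    (p : Fin N → ℝ)
    (hp : ∀ j, p j = ‖c j‖ ^ 2) :
    (Matrix.PosSemidef (fun j' j => star (c j') * c j : Matrix (Fin N) (Fin N) ℂ)) ∧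
    (Matrix.rank (fun j' j => star (c j') * c j : Matrix (Fin N) (Fin N) ℂ) ≤ 1) ∧
    (∀ j, (fun j' j => star (c j') * c j : Matrix (Fin N) (Fin N) ℂ) j j = (p j : ℂ)) ∧
    (Γ1 - Matrix.hadamard (fun j' j => star (c j') * c j) Γ2).PosSemidef :=
  single_operator_necessity_general ψ1 ψ2 Γ1 Γ2 hΓ1 hΓ2 AS c hAS hAct p hp
end

section
/- (Theorem 2, sufficiency.) Let {A_k}_{k=1,…,M} be linear operators on ℂ^D satisfying both Σ_k A_k†A_k = 1 and Σ_k A_k A_k† = 1. Then for every density matrix ρ₁ on ℂ^D, setting ρ₂ = Σ_k A_k ρ₁ A_k†, the eigenvalue vector of ρ₂ is majorized by the eigenvalue vector of ρ₁: λ(ρ₂) ≺ λ(ρ₁). -/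
open Matrix BigOperators
open scoped ComplexOrder

/-- The sum of the `k` largest entries of `x`, expressed as the supremum of the
sums of `x` over all subsets of cardinality `k`. -/
noncomputable def kMaxSum {D : ℕ} (x : Fin D → ℝ) (k : ℕ) : ℝ :=
  sSup ((fun A : Finset (Fin D) => ∑ i ∈ A, x i) '' {A : Finset (Fin D) | A.card = k})

def MajorizedBy {D : ℕ} (x y : Fin D → ℝ) : Prop :=
  (∀ k, k ≤ D → kMaxSum x k ≤ kMaxSum y k) ∧ (∑ i, x i = ∑ i, y i)

/-!
Write `ρ₁ = U diag(λ) U†` and `ρ₂ = V diag(μ) V†`, and put `C_k = V† A_k U`. Then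
`diag(μ) = Σ_k C_k diag(λ) C_k†`, so `μ = B λ` with `B_ij = Σ_k |(C_k)_ij|²`. The two
normalisations of the `A_k` survive the unitary change of basis and say that the rows and the
columns of `B` sum to `1`, so `B` is doubly stochastic. Finally, `Σ_{i ∈ S} (B λ)_i = Σ_j c_j λ_j`
with weights `c_j ∈ [0, 1]` summing to `|S|`, and such a weighted sum is at most the sum of the
`|S|` largest entries of `λ`.
-/

lemma Finset.sum_mul_le_sum_of_threshold {ι : Type*} [Fintype ι] [DecidableEq ι]
    (x c : ι → ℝ) (T : Finset ι) (t : ℝ)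
    (hT : ∀ i ∈ T, t ≤ x i) (hTc : ∀ j ∉ T, x j ≤ t)
    (hc₀ : ∀ j, 0 ≤ c j) (hc₁ : ∀ j, c j ≤ 1) (hc : ∑ j, c j = T.card) :
    ∑ j, c j * x j ≤ ∑ i ∈ T, x i := by
  -- `e j * (x j - t) ≤ 0` for every `j`, while `∑ j, e j = 0`.
  set e : ι → ℝ := fun j => c j - if j ∈ T then 1 else 0
  have he : ∀ j, e j * x j ≤ e j * t := by
    intro j
    by_cases hj : j ∈ T
    · simp only [e, hj, if_true]
      nlinarith [hT j hj, hc₁ j]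
    · simp only [e, hj, if_false, sub_zero]
      exact mul_le_mul_of_nonneg_left (hTc j hj) (hc₀ j)
  calc ∑ j, c j * x j = ∑ i ∈ T, x i + ∑ j, e j * x j := by
        simp [e, sub_mul, Finset.sum_sub_distrib, ite_mul, Finset.sum_ite_mem]
    _ ≤ ∑ i ∈ T, x i + ∑ j, e j * t := add_le_add_right (Finset.sum_le_sum fun j _ => he j) _
    _ = ∑ i ∈ T, x i := by
        simp [e, ← Finset.sum_mul, Finset.sum_sub_distrib, hc]

lemma exists_card_eq_threshold {ι : Type*} [Fintype ι] [DecidableEq ι] (x : ι → ℝ) {k : ℕ}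
    (hk : k ≤ Fintype.card ι) :
    ∃ T : Finset ι, T.card = k ∧ ∃ t, (∀ i ∈ T, t ≤ x i) ∧ ∀ j ∉ T, x j ≤ t := by
  induction k with
  | zero =>
    obtain ⟨t, ht⟩ := (Set.finite_range x).bddAbove
    exact ⟨∅, rfl, t, by simp, fun j _ => ht ⟨j, rfl⟩⟩
  | succ k ih =>
    obtain ⟨T, rfl, t, hT, hTc⟩ := ih (by omega)
    have hne : Tᶜ.Nonempty := by
      rw [← Finset.card_pos, Finset.card_compl]; omega
    obtain ⟨j₀, hj₀, hmax⟩ := Tᶜ.exists_max_image x hne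
    have hj₀T : j₀ ∉ T := Finset.mem_compl.mp hj₀
    refine ⟨insert j₀ T, Finset.card_insert_of_notMem hj₀T, x j₀, ?_, ?_⟩
    · simp only [Finset.forall_mem_insert, le_refl, true_and]
      exact fun i hi => (hTc j₀ hj₀T).trans (hT i hi)
    · intro j hj
      rw [Finset.mem_insert, not_or] at hj
      exact hmax j (Finset.mem_compl.mpr hj.2)

section kMaxSum

variable {D : ℕ}

lemma sum_le_kMaxSum (x : Fin D → ℝ) (T : Finset (Fin D)) : ∑ i ∈ T, x i ≤ kMaxSum x T.card :=
  le_csSup ((Set.toFinite _).image _).bddAbove ⟨T, rfl, rfl⟩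

lemma kMaxSum_le {x : Fin D → ℝ} {k : ℕ} {c : ℝ} (hk : k ≤ D)
    (h : ∀ T : Finset (Fin D), T.card = k → ∑ i ∈ T, x i ≤ c) : kMaxSum x k ≤ c := by
  obtain ⟨T, _, hT⟩ :=
    Finset.exists_subset_card_eq (s := (Finset.univ : Finset (Fin D))) (by simpa using hk)
  exact csSup_le ⟨_, T, hT, rfl⟩ (by rintro _ ⟨T, hT, rfl⟩; exact h T hT)

lemma sum_mul_le_kMaxSum (x c : Fin D → ℝ) {k : ℕ} (hk : k ≤ D)
    (hc₀ : ∀ j, 0 ≤ c j) (hc₁ : ∀ j, c j ≤ 1) (hc : ∑ j, c j = k) :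
    ∑ j, c j * x j ≤ kMaxSum x k := by
  obtain ⟨T, rfl, t, hT, hTc⟩ := exists_card_eq_threshold x (by simpa using hk)
  exact (T.sum_mul_le_sum_of_threshold x c t hT hTc hc₀ hc₁ hc).trans (sum_le_kMaxSum x T)

theorem majorizedBy_mulVec_of_mem_doublyStochastic {B : Matrix (Fin D) (Fin D) ℝ}
    (hB : B ∈ doublyStochastic ℝ (Fin D)) (x : Fin D → ℝ) : MajorizedBy (B *ᵥ x) x := by
  refine ⟨fun k hk => kMaxSum_le hk fun S hS => ?_, sum_mulVec_of_mem_doublyStochastic hB⟩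
  have hS_sum : ∑ i ∈ S, (B *ᵥ x) i = ∑ j, (∑ i ∈ S, B i j) * x j := by
    simp only [mulVec, dotProduct, Finset.sum_mul]
    exact Finset.sum_comm
  rw [hS_sum]
  refine sum_mul_le_kMaxSum x _ hk
    (fun j => Finset.sum_nonneg fun i _ => nonneg_of_mem_doublyStochastic hB) (fun j => ?_) ?_
  · exact (Finset.sum_le_univ_sum_of_nonneg fun i => nonneg_of_mem_doublyStochastic hB).trans_eq
      (sum_col_of_mem_doublyStochastic hB j)
  · rw [Finset.sum_comm]
    simp [sum_row_of_mem_doublyStochastic hB, hS]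

end kMaxSum

section krausWeights

variable {𝕜 ι m n : Type*} [RCLike 𝕜] [Fintype ι]

def krausWeights (C : ι → Matrix m n 𝕜) : Matrix m n ℝ :=
  fun i j => ∑ k, ‖C k i j‖ ^ 2

lemma krausWeights_nonneg (C : ι → Matrix m n 𝕜) (i : m) (j : n) : 0 ≤ krausWeights C i j :=
  Finset.sum_nonneg fun _ _ => sq_nonneg _

lemma krausWeights_conjTranspose (C : ι → Matrix m n 𝕜) :
    krausWeights (fun k => (C k)ᴴ) = (krausWeights C)ᵀ := by
  ext i j
  simp [krausWeights]

variable [Fintype n] [DecidableEq n]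

lemma sum_mul_diagonal_mul_conjTranspose_apply_self (C : ι → Matrix m n 𝕜) (x : n → ℝ) (i : m) :
    (∑ k, C k * (diagonal (RCLike.ofReal ∘ x) : Matrix n n 𝕜) * (C k)ᴴ) i i =
      (krausWeights C *ᵥ x) i := by
  simp only [Matrix.sum_apply, mul_apply, diagonal_apply, conjTranspose_apply, mul_ite, mul_zero,
    Finset.sum_ite_eq', Finset.mem_univ, if_true, Function.comp_apply,
    krausWeights, mulVec, dotProduct, Finset.sum_mul]
  push_cast
  rw [Finset.sum_comm]
  refine Finset.sum_congr rfl fun j _ => Finset.sum_congr rfl fun k _ => ?_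
  rw [mul_right_comm, RCLike.star_def, RCLike.mul_conj]

lemma krausWeights_mulVec_one [DecidableEq m] {C : ι → Matrix m n 𝕜}
    (hC : ∑ k, C k * (C k)ᴴ = 1) : krausWeights C *ᵥ 1 = 1 := by
  funext i
  have h := sum_mul_diagonal_mul_conjTranspose_apply_self C 1 i
  have h1 : diagonal (RCLike.ofReal ∘ (1 : n → ℝ)) = (1 : Matrix n n 𝕜) := by
    ext a b; simp [diagonal_apply, one_apply]
  simp only [h1, Matrix.mul_one, hC, one_apply_eq] at h
  exact_mod_cast h.symm

lemma krausWeights_mem_doublyStochastic {C : ι → Matrix n n 𝕜}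
    (hC₁ : ∑ k, (C k)ᴴ * C k = 1) (hC₂ : ∑ k, C k * (C k)ᴴ = 1) :
    krausWeights C ∈ doublyStochastic ℝ n := by
  refine ⟨krausWeights_nonneg C, krausWeights_mulVec_one hC₂, ?_⟩
  rw [← mulVec_transpose, ← krausWeights_conjTranspose]
  exact krausWeights_mulVec_one (by simpa using hC₁)

end krausWeights

section conj

variable {𝕜 ι n : Type*} [RCLike 𝕜] [Fintype ι] [Fintype n]

lemma sum_conj_mul_conj (A : ι → Matrix n n 𝕜) (P Q X : Matrix n n 𝕜) :
    ∑ k, (Pᴴ * A k * Q) * X * (Pᴴ * A k * Q)ᴴ = Pᴴ * (∑ k, A k * (Q * X * Qᴴ) * (A k)ᴴ) * P := by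
  simp only [conjTranspose_mul, conjTranspose_conjTranspose, Finset.mul_sum, Finset.sum_mul,
    Matrix.mul_assoc]

variable [DecidableEq n]

lemma sum_unitary_conj_mul_conjTranspose_eq_one (A : ι → Matrix n n 𝕜) {U V : Matrix n n 𝕜}
    (hU : U ∈ unitaryGroup n 𝕜) (hV : V ∈ unitaryGroup n 𝕜) (hA : ∑ k, A k * (A k)ᴴ = 1) :
    ∑ k, (Vᴴ * A k * U) * (Vᴴ * A k * U)ᴴ = 1 := by
  have h := sum_conj_mul_conj A V U 1
  rw [Matrix.mul_one U, ← star_eq_conjTranspose U, mem_unitaryGroup_iff.mp hU] at h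
  simp only [Matrix.mul_one, hA] at h
  rw [h, ← star_eq_conjTranspose, mem_unitaryGroup_iff'.mp hV]

lemma sum_unitary_conj_conjTranspose_mul_eq_one (A : ι → Matrix n n 𝕜) {U V : Matrix n n 𝕜}
    (hU : U ∈ unitaryGroup n 𝕜) (hV : V ∈ unitaryGroup n 𝕜) (hA : ∑ k, (A k)ᴴ * A k = 1) :
    ∑ k, (Vᴴ * A k * U)ᴴ * (Vᴴ * A k * U) = 1 := by
  simpa [Matrix.mul_assoc] using
    sum_unitary_conj_mul_conjTranspose_eq_one (fun k => (A k)ᴴ) hV hU (by simpa using hA)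

theorem Matrix.IsHermitian.eigenvalues_sum_mul_mul_conjTranspose {ρ : Matrix n n 𝕜}
    (hρ : ρ.IsHermitian) (A : ι → Matrix n n 𝕜) (hΦ : (∑ k, A k * ρ * (A k)ᴴ).IsHermitian) :
    hΦ.eigenvalues = krausWeights (fun k => (hΦ.eigenvectorUnitary : Matrix n n 𝕜)ᴴ * A k *
      (hρ.eigenvectorUnitary : Matrix n n 𝕜)) *ᵥ hρ.eigenvalues := by
  funext i
  set V : Matrix n n 𝕜 := (hΦ.eigenvectorUnitary : Matrix n n 𝕜)
  set U : Matrix n n 𝕜 := (hρ.eigenvectorUnitary : Matrix n n 𝕜)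
  have h := congr_fun (congr_fun hΦ.conjStarAlgAut_star_eigenvectorUnitary i) i
  rw [Unitary.conjStarAlgAut_star_apply, star_eq_conjTranspose, diagonal_apply_eq] at h
  have hρ' : ρ = U * diagonal (RCLike.ofReal ∘ hρ.eigenvalues) * Uᴴ := hρ.spectral_theorem
  have hΦρ := congrArg (fun M => (Vᴴ * (∑ k, A k * M * (A k)ᴴ) * V) i i) hρ'
  rw [hΦρ, ← sum_conj_mul_conj, sum_mul_diagonal_mul_conjTranspose_apply_self,
    Function.comp_apply] at h
  exact_mod_cast h.symm

end conj

theorem theorem2_sufficiency_general {D M : ℕ}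
    (A : Fin M → Matrix (Fin D) (Fin D) ℂ)
    (hA1 : ∑ k, (A k)ᴴ * A k = 1)
    (hA2 : ∑ k, A k * (A k)ᴴ = 1)
    (ρ1 : Matrix (Fin D) (Fin D) ℂ)
    (hρ1 : ρ1.PosSemidef)
    (hρ2 : (∑ k, A k * ρ1 * (A k)ᴴ).IsHermitian) :
    MajorizedBy hρ2.eigenvalues hρ1.1.eigenvalues := by
  have hU := hρ1.1.eigenvectorUnitary.2
  have hV := hρ2.eigenvectorUnitary.2
  rw [hρ1.1.eigenvalues_sum_mul_mul_conjTranspose A hρ2]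
  exact majorizedBy_mulVec_of_mem_doublyStochastic (krausWeights_mem_doublyStochastic
    (sum_unitary_conj_conjTranspose_mul_eq_one A hU hV hA1)
    (sum_unitary_conj_mul_conjTranspose_eq_one A hU hV hA2)) _

/-- **Theorem 2, sufficiency.**  If the Kraus operators `A k` satisfy both
`Σ A_k† A_k = 1` and `Σ A_k A_k† = 1`, then for every density matrix `ρ₁` the
output `ρ₂ = Σ A_k ρ₁ A_k†` is at least as mixed as `ρ₁`:
`λ(ρ₂) ≺ λ(ρ₁)`. -/
theorem theorem2_sufficiency {D M : ℕ}
    (A : Fin M → Matrix (Fin D) (Fin D) ℂ)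
    (hA1 : ∑ k, (A k)ᴴ * A k = 1)
    (hA2 : ∑ k, A k * (A k)ᴴ = 1)
    (ρ1 : Matrix (Fin D) (Fin D) ℂ)
    (hρ1 : ρ1.PosSemidef) (hρ1tr : ρ1.trace = 1)
    (hρ2 : (∑ k, A k * ρ1 * (A k)ᴴ).IsHermitian) :
    MajorizedBy hρ2.eigenvalues hρ1.1.eigenvalues :=
  theorem2_sufficiency_general A hA1 hA2 ρ1 hρ1 hρ2
end

section
/- (Theorem 2, necessity.) Let {A_k}_{k=1,…,M} be linear operators on ℂ^D satisfying Σ_k A_k†A_k = 1. Suppose that for every density matrix ρ₁ on ℂ^D, the eigenvalue vector of ρ₂ = Σ_k A_k ρ₁ A_k† is majorized by that of ρ₁, i.e., λ(ρ₂) ≺ λ(ρ₁). Then Σ_k A_k A_k† = 1. -/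
/-!
Feed the channel the maximally mixed state `ρ = 1 / D`. Its output is `(1 / D) Σ A_k A_k†`, and
the only probability vector majorized by the uniform one is the uniform one (the largest entry is at
most `1 / D` and the entries sum to `1`). Hence every eigenvalue of `(1 / D) Σ A_k A_k†` is `1 / D`,
so this Hermitian matrix equals `1 / D`, i.e. `Σ A_k A_k† = 1`.
-/

open Matrix BigOperators
open scoped ComplexOrder

lemma kMaxSum_const {D : ℕ} (c : ℝ) {k : ℕ} (hk : k ≤ D) :
    kMaxSum (fun _ : Fin D => c) k = k * c := by
  have himage : (fun A : Finset (Fin D) => ∑ _i ∈ A, c) '' {A | A.card = k} = {(k : ℝ) * c} := by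
    obtain ⟨B, -, hB⟩ := Finset.exists_subset_card_eq (s := (Finset.univ : Finset (Fin D)))
      (by simpa using hk)
    ext r
    simp only [Set.mem_image, Set.mem_ofPred_eq, Set.mem_singleton_iff, Finset.sum_const,
      nsmul_eq_mul]
    exact ⟨fun ⟨C, hC, hr⟩ ↦ hC ▸ hr.symm, fun hr ↦ ⟨B, hB, hB ▸ hr.symm⟩⟩
  rw [kMaxSum, himage, csSup_singleton]

lemma le_kMaxSum_one {D : ℕ} (x : Fin D → ℝ) (i : Fin D) : x i ≤ kMaxSum x 1 :=
  le_csSup ((Set.toFinite _).image _).bddAbove ⟨{i}, by simp, by simp⟩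

lemma MajorizedBy.eq_const {D : ℕ} {x : Fin D → ℝ} {c : ℝ}
    (h : MajorizedBy x fun _ ↦ c) : x = fun _ ↦ c := by
  rcases Nat.eq_zero_or_pos D with rfl | hD
  · exact funext fun i ↦ i.elim0
  have hle : ∀ i, x i ≤ c := fun i ↦ by
    simpa [kMaxSum_const c hD] using (le_kMaxSum_one x i).trans (h.1 1 hD)
  funext i
  exact (Finset.sum_eq_sum_iff_of_le fun i _ ↦ hle i).1 h.2 i (Finset.mem_univ i)

lemma Matrix.IsHermitian.eigenvalues_eq_const_iff {n 𝕜 : Type*} [RCLike 𝕜] [Fintype n]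
    [DecidableEq n] {A : Matrix n n 𝕜} (hA : A.IsHermitian) (r : ℝ) :
    hA.eigenvalues = Function.const n r ↔ A = (r : 𝕜) • 1 := by
  refine ⟨fun h ↦ ?_, fun h ↦ ?_⟩
  · rw [hA.spectral_theorem, h, Function.comp_const,
      ← map_one (Unitary.conjStarAlgAut 𝕜 _ hA.eigenvectorUnitary), ← map_smul,
      smul_one_eq_diagonal]
    rfl
  · subst h
    ext i
    rw [hA.eigenvalues_eq, smul_mulVec, one_mulVec, dotProduct_smul, dotProduct_comm,
      ← EuclideanSpace.inner_eq_star_dotProduct, inner_self_eq_norm_sq_to_K,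
      hA.eigenvectorBasis.orthonormal.1 i]
    simp

theorem theorem2_necessity_general {D M : ℕ}
    (A : Fin M → Matrix (Fin D) (Fin D) ℂ)
    (hmaj : ∀ (ρ1 : Matrix (Fin D) (Fin D) ℂ) (hρ1 : ρ1.PosSemidef),
      ρ1.trace = 1 →
      ∀ (hρ2 : (∑ k, A k * ρ1 * (A k)ᴴ).IsHermitian),
        MajorizedBy hρ2.eigenvalues hρ1.1.eigenvalues) :
    ∑ k, A k * (A k)ᴴ = 1 := by
  rcases Nat.eq_zero_or_pos D with rfl | hD
  · exact Subsingleton.elim _ _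
  set c : ℝ := (D : ℝ)⁻¹
  have hc : (c : ℂ) ≠ 0 := by simp [c, hD.ne']
  set ρ : Matrix (Fin D) (Fin D) ℂ := (c : ℂ) • 1
  have hρ : ρ.PosSemidef := PosSemidef.one.smul (by positivity)
  have htrace : ρ.trace = 1 := by simp [ρ, c, hD.ne']
  have houtput : ∑ k, A k * ρ * (A k)ᴴ = (c : ℂ) • ∑ k, A k * (A k)ᴴ := by
    simp [ρ, Finset.smul_sum]
  have hρ2 : (∑ k, A k * ρ * (A k)ᴴ).IsHermitian :=
    (posSemidef_sum _ fun k _ ↦ hρ.mul_mul_conjTranspose_same (A k)).1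
  have hρ_eig : hρ.1.eigenvalues = Function.const _ c := (hρ.1.eigenvalues_eq_const_iff c).2 rfl
  have hmaj_uniform := hmaj ρ hρ htrace hρ2
  rw [hρ_eig] at hmaj_uniform
  have hρ2_eq := (hρ2.eigenvalues_eq_const_iff c).1 hmaj_uniform.eq_const
  rw [houtput] at hρ2_eq
  exact smul_right_injective _ hc hρ2_eq

/-- **Theorem 2, necessity.**  Let the Kraus operators `A k` satisfy
`Σ A_k† A_k = 1`.  If for every density matrix `ρ₁` the output
`ρ₂ = Σ A_k ρ₁ A_k†` satisfies `λ(ρ₂) ≺ λ(ρ₁)`, then `Σ A_k A_k† = 1`. -/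
theorem theorem2_necessity {D M : ℕ}
    (A : Fin M → Matrix (Fin D) (Fin D) ℂ)
    (hA1 : ∑ k, (A k)ᴴ * A k = 1)
    (hmaj : ∀ (ρ1 : Matrix (Fin D) (Fin D) ℂ) (hρ1 : ρ1.PosSemidef),
      ρ1.trace = 1 →
      ∀ (hρ2 : (∑ k, A k * ρ1 * (A k)ᴴ).IsHermitian),
        MajorizedBy hρ2.eigenvalues hρ1.1.eigenvalues) :
    ∑ k, A k * (A k)ᴴ = 1 :=
  theorem2_necessity_general A hmaj
end

section
/- (Strong no-cloning.) Let {|ψ_j⟩}_{j=1,…,N} be unit vectors in ℂ^D. Suppose there exists a deterministic cloning transformation: a finite family of operators {A_k} from the relevant Hilbert space with Σ_k A_k†A_k = 1 such that A_k(|ψ_j⟩⊗|0⟩) = c_{kj}(|ψ_j⟩⊗|ψ_j⟩) for complex scalars c_{kj} with Σ_k |c_{kj}|² = 1 for every j, where |0⟩ is a fixed unit vector (blank state) in ℂ^D. Then for every pair j, j', either ⟨ψ_{j'}|ψ_j⟩ = 0 or |⟨ψ_{j'}|ψ_j⟩| = 1; i.e., any two states in the set are either orthogonal or identical up to a phase.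 -/
open Matrix BigOperators
open scoped ComplexOrder

private lemma prod_dot {D : ℕ} (a b a' b' : Fin D → ℂ) :
    star (fun x : Fin D × Fin D => a x.1 * b x.2) ⬝ᵥ
      (fun x : Fin D × Fin D => a' x.1 * b' x.2)
      = (star a ⬝ᵥ a') * (star b ⬝ᵥ b') := by
  rw [dotProduct, dotProduct, dotProduct, Finset.sum_mul_sum, Fintype.sum_prod_type]
  apply Finset.sum_congr rfl; intro i _
  apply Finset.sum_congr rfl; intro j _
  simp only [Pi.star_apply, star_mul']
  ring

private lemma sum_mulVec' {m n M : Type*} [Fintype m] [Fintype n] [Fintype M]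
    (f : M → Matrix m n ℂ) (x : n → ℂ) : (∑ k, f k) *ᵥ x = ∑ k, f k *ᵥ x := by
  ext i
  simp only [Matrix.mulVec, dotProduct, Finset.sum_apply, Matrix.sum_apply,
    Finset.sum_mul]
  rw [Finset.sum_comm]

private lemma sum_normsq {n : ℕ} (v : Fin n → ℂ) (h : star v ⬝ᵥ v = 1) :
    ∑ i, ‖v i‖ ^ 2 = 1 := by
  have : ((∑ i, ‖v i‖ ^ 2 : ℝ) : ℂ) = 1 := by
    push_cast
    rw [← h]
    simp [dotProduct, Complex.conj_mul', Complex.sq_norm]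
  exact_mod_cast this

private lemma dot_norm_le {n : ℕ} (a b : Fin n → ℂ)
    (ha : ∑ i, ‖a i‖ ^ 2 = 1) (hb : ∑ i, ‖b i‖ ^ 2 = 1) :
    ‖star a ⬝ᵥ b‖ ≤ 1 := by
  calc ‖star a ⬝ᵥ b‖ ≤ ∑ i, ‖star (a i) * b i‖ := norm_sum_le _ _
    _ ≤ ∑ i, (‖a i‖ ^ 2 + ‖b i‖ ^ 2) / 2 := by
        apply Finset.sum_le_sum; intro i _
        rw [norm_mul, norm_star]
        nlinarith [sq_nonneg (‖a i‖ - ‖b i‖)]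
    _ = 1 := by rw [← Finset.sum_div, Finset.sum_add_distrib, ha, hb]; norm_num

/-- **Strong no-cloning theorem.**  If there is a deterministic cloning
transformation on `ℂ^D ⊗ ℂ^D` taking `|ψ_j⟩ ⊗ |0⟩` to `|ψ_j⟩ ⊗ |ψ_j⟩` for a
fixed blank unit vector `|0⟩`, then any two of the states `ψ_j` are either
orthogonal or identical up to a phase. -/
theorem strong_no_cloning {D N M : ℕ}
    (ψ : Fin N → (Fin D → ℂ))
    (hψunit : ∀ j, star (ψ j) ⬝ᵥ ψ j = 1)
    (e0 : Fin D → ℂ)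
    (he0 : star e0 ⬝ᵥ e0 = 1)
    (A : Fin M → Matrix (Fin D × Fin D) (Fin D × Fin D) ℂ)
    (c : Fin M → Fin N → ℂ)
    (hA1 : ∑ k, (A k)ᴴ * A k = 1)
    (hAct : ∀ k j, (A k) *ᵥ (fun x : Fin D × Fin D => ψ j x.1 * e0 x.2)
      = c k j • (fun x : Fin D × Fin D => ψ j x.1 * ψ j x.2))
    (hc : ∀ j, ∑ k, ‖c k j‖ ^ 2 = 1) :
    ∀ j' j, star (ψ j') ⬝ᵥ ψ j = 0 ∨ ‖star (ψ j') ⬝ᵥ ψ j‖ = 1 := by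
  intro j' j
  set u : Fin N → (Fin D × Fin D → ℂ) := fun j x => ψ j x.1 * e0 x.2 with hu
  set v : Fin N → (Fin D × Fin D → ℂ) := fun j x => ψ j x.1 * ψ j x.2 with hv
  set g : ℂ := star (ψ j') ⬝ᵥ ψ j with hg
  set π : ℂ := ∑ k, star (c k j') * c k j with hπ
  -- key identity: g = π * g^2
  have key : g = π * g ^ 2 := by
    have h1 : star (u j') ⬝ᵥ u j = g * 1 := by
      rw [hu, ← he0]; exact prod_dot _ _ _ _
    have h2 : star (v j') ⬝ᵥ v j = g * g := by
      rw [hv]; exact prod_dot _ _ _ _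
    have h3 : star (u j') ⬝ᵥ u j = π * (g * g) := by
      calc star (u j') ⬝ᵥ u j
          = star (u j') ⬝ᵥ ((1 : Matrix (Fin D × Fin D) (Fin D × Fin D) ℂ) *ᵥ u j) := by
            rw [one_mulVec]
        _ = star (u j') ⬝ᵥ ((∑ k, (A k)ᴴ * A k) *ᵥ u j) := by rw [hA1]
        _ = ∑ k, star (u j') ⬝ᵥ (((A k)ᴴ * A k) *ᵥ u j) := by
            rw [sum_mulVec']
            simp only [dotProduct, Finset.sum_apply, Finset.mul_sum]
            rw [Finset.sum_comm]
        _ = ∑ k, star (A k *ᵥ u j') ⬝ᵥ (A k *ᵥ u j) := by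
            apply Finset.sum_congr rfl; intro k _
            rw [← Matrix.mulVec_mulVec, Matrix.dotProduct_mulVec, Matrix.star_mulVec]
        _ = ∑ k, (star (c k j') * c k j) * (star (v j') ⬝ᵥ v j) := by
            apply Finset.sum_congr rfl; intro k _
            rw [hAct k j', hAct k j, star_smul, smul_dotProduct, dotProduct_smul,
              smul_eq_mul, smul_eq_mul]
            ring
        _ = π * (star (v j') ⬝ᵥ v j) := by rw [hπ, Finset.sum_mul]
        _ = π * (g * g) := by rw [h2]
    rw [mul_one] at h1
    calc g = star (u j') ⬝ᵥ u j := h1.symm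
      _ = π * (g * g) := h3
      _ = π * g ^ 2 := by ring
  have hgle : ‖g‖ ≤ 1 := dot_norm_le _ _ (sum_normsq _ (hψunit j')) (sum_normsq _ (hψunit j))
  have hπle : ‖π‖ ≤ 1 := dot_norm_le (fun k => c k j') (fun k => c k j) (hc j') (hc j)
  by_cases h0 : g = 0
  · left; exact h0
  · right
    have hgpos : 0 < ‖g‖ := norm_pos_iff.mpr h0
    have hn := congrArg norm key
    rw [norm_mul, norm_pow] at hn
    exact le_antisymm hgle (by nlinarith [norm_nonneg π])
end
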